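/- arXiv:0709.2646 — 3 statements merged into one kernel-verified Lean document; each statement's English description precedes it below -/
import Mathlib

section
/- Let P^1 and P^2 be finite posets on [n] such that P^1 refines P^2 (every relation of P^2 holds in P^1), and let T_1,...,T_N ∈ ℝ^n_{>0} be data compatible with P^1 (hence with P^2). For l = 1,2 let ℓ_l(λ) = Σ_{k=1}^N Σ_{i=1}^n ( log λ_i − λ_i (t_{ki} − max_{j ∈ pa_l(i)} t_{kj}) ) be the log-likelihood with predecessor sets taken in P^l, and let λ̂^l be its maximizer, λ̂^l_i = N / Σ_k (t_{ki} − max_{j ∈ pa_l(i)} t_{kj}). Then ℓ_1(λ̂^1) ≥ ℓ_2(λ̂^2), i.e., refining a poset compatibly with the data does not decrease the maximum value of the likelihood. -/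
/-- The maximum of `t` over the strict predecessors of `i` in the poset given by the strict
order relation `P`, with the convention that the maximum over the empty set is `0`. -/
noncomputable def maxPa {n : ℕ} (P : Fin n → Fin n → Prop) (t : Fin n → ℝ) (i : Fin n) : ℝ :=
  sSup (insert 0 (t '' {j | P j i}))

/-- The log-likelihood function of the fully observed CT-CBN. -/
noncomputable def loglik {n N : ℕ} (P : Fin n → Fin n → Prop) (T : Fin N → Fin n → ℝ)
    (lam : Fin n → ℝ) : ℝ :=
  ∑ k : Fin N, ∑ i : Fin n, (Real.log (lam i) - lam i * (T k i - maxPa P (T k) i))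

lemma maxPa_finite {n : ℕ} (P : Fin n → Fin n → Prop) (t : Fin n → ℝ) (i : Fin n) :
    (insert (0:ℝ) (t '' {j | P j i})).Finite :=
  ((Set.toFinite {j | P j i}).image t).insert 0

lemma maxPa_lt {n : ℕ} (P : Fin n → Fin n → Prop) (t : Fin n → ℝ) (i : Fin n)
    (h0 : 0 < t i) (h : ∀ j, P j i → t j < t i) : maxPa P t i < t i := by
  unfold maxPa
  rw [(maxPa_finite P t i).csSup_lt_iff (by simp)]
  rintro x (rfl | ⟨j, hj, rfl⟩)
  · exact h0
  · exact h j hj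

lemma maxPa_mono {n : ℕ} (P1 P2 : Fin n → Fin n → Prop) (t : Fin n → ℝ) (i : Fin n)
    (href : ∀ j, P2 j i → P1 j i) : maxPa P2 t i ≤ maxPa P1 t i := by
  refine csSup_le_csSup (maxPa_finite P1 t i).bddAbove (by simp) ?_
  rintro x (rfl | ⟨j, hj, rfl⟩)
  · exact Set.mem_insert _ _
  · exact Set.mem_insert_of_mem _ ⟨j, href j hj, rfl⟩

/-- If the poset `P^1` refines the poset `P^2` and the data are compatible with `P^1`
(hence with `P^2`), then the maximized log-likelihood for `P^1` is at least that for `P^2`: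
refining a poset compatibly with the data does not decrease the maximum likelihood. -/
theorem stmt1 {n N : ℕ} (P1 P2 : Fin n → Fin n → Prop)
    (hirr1 : ∀ i, ¬ P1 i i) (htrans1 : ∀ i j k, P1 i j → P1 j k → P1 i k)
    (hirr2 : ∀ i, ¬ P2 i i) (htrans2 : ∀ i j k, P2 i j → P2 j k → P2 i k)
    (href : ∀ i j : Fin n, P2 j i → P1 j i)
    (T : Fin N → Fin n → ℝ)
    (hpos : ∀ k i, 0 < T k i)
    (hcompat : ∀ k, ∀ i j : Fin n, P1 j i → T k j < T k i)
    (lamhat1 lamhat2 : Fin n → ℝ)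
    (hlamhat1 : ∀ i, lamhat1 i = N / ∑ k : Fin N, (T k i - maxPa P1 (T k) i))
    (hlamhat2 : ∀ i, lamhat2 i = N / ∑ k : Fin N, (T k i - maxPa P2 (T k) i)) :
    loglik P2 T lamhat2 ≤ loglik P1 T lamhat1 := by
  rcases Nat.eq_zero_or_pos N with hN | hN
  · subst hN; simp [loglik]
  have hNpos : (0:ℝ) < N := by exact_mod_cast hN
  set S1 : Fin n → ℝ := fun i => ∑ k, (T k i - maxPa P1 (T k) i) with hS1def
  set S2 : Fin n → ℝ := fun i => ∑ k, (T k i - maxPa P2 (T k) i) with hS2def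
  have hd1pos : ∀ k i, 0 < T k i - maxPa P1 (T k) i := fun k i =>
    sub_pos.mpr (maxPa_lt _ _ _ (hpos k i) (fun j hj => hcompat k i j hj))
  have hd2pos : ∀ k i, 0 < T k i - maxPa P2 (T k) i := fun k i =>
    sub_pos.mpr (maxPa_lt _ _ _ (hpos k i) (fun j hj => hcompat k i j (href i j hj)))
  have hne : (Finset.univ : Finset (Fin N)).Nonempty := ⟨⟨0, hN⟩, Finset.mem_univ _⟩
  have hS1pos : ∀ i, 0 < S1 i := fun i => Finset.sum_pos (fun k _ => hd1pos k i) hne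
  have hS2pos : ∀ i, 0 < S2 i := fun i => Finset.sum_pos (fun k _ => hd2pos k i) hne
  have hS12 : ∀ i, S1 i ≤ S2 i := fun i =>
    Finset.sum_le_sum fun k _ =>
      sub_le_sub_left (maxPa_mono P1 P2 (T k) i (fun j hj => href i j hj)) _
  have expand : ∀ (P : Fin n → Fin n → Prop) (lam : Fin n → ℝ),
      loglik P T lam =
        ∑ i, ((N:ℝ) * Real.log (lam i) - lam i * ∑ k, (T k i - maxPa P (T k) i)) := by
    intro P lam
    unfold loglik
    rw [Finset.sum_comm]
    refine Finset.sum_congr rfl fun i _ => ?_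
    rw [Finset.sum_sub_distrib, Finset.sum_const, Finset.card_univ, Fintype.card_fin,
      ← Finset.mul_sum, nsmul_eq_mul]
  rw [expand, expand]
  refine Finset.sum_le_sum fun i _ => ?_
  rw [hlamhat1 i, hlamhat2 i]
  show (N:ℝ) * Real.log ((N:ℝ) / S2 i) - (N:ℝ) / S2 i * S2 i ≤
    (N:ℝ) * Real.log ((N:ℝ) / S1 i) - (N:ℝ) / S1 i * S1 i
  rw [div_mul_cancel₀ _ (hS1pos i).ne', div_mul_cancel₀ _ (hS2pos i).ne',
    Real.log_div hNpos.ne' (hS1pos i).ne', Real.log_div hNpos.ne' (hS2pos i).ne']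
  have : Real.log (S1 i) ≤ Real.log (S2 i) := Real.log_le_log (hS1pos i) (hS12 i)
  nlinarith [hNpos]
end

section
/- Let λ_1, λ_2 > 0 and consider the two-element chain poset 1 ≺ 2 with states ∅, {1}, {1,2} and rate matrix Q = [[−λ_1, λ_1, 0], [0, −λ_2, λ_2], [0, 0, 0]]. Let p̃_{∅,{1}}(t) = (1 − e^{−λ_1 t}) e^{−λ_2 t} be the corresponding entry of the discrete CBN transition function. Then the second derivative satisfies (d²/dt²) p̃_{∅,{1}}(t) |_{t=0} = −λ_1² − 2λ_1λ_2, whereas (Q²)_{∅,{1}} = −λ_1² − λ_1λ_2; in particular these differ (since λ_1λ_2 > 0), so p̃ is not a second order approximation of exp(tQ). -/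
/-! Writing `p̃(t) = e^{-λ₂t} - e^{-(λ₁+λ₂)t}`, each exponential `e^{ct}` contributes `c²` to
`p̃''(0)`, giving `λ₂² - (λ₁+λ₂)² = -λ₁² - 2λ₁λ₂`. In `Q²` the entry `(∅,{1})` only collects the
paths `∅ → ∅ → {1}` and `∅ → {1} → {1}`, giving `-λ₁² - λ₁λ₂`; the two differ by `λ₁λ₂ > 0`. -/

open Real

lemma hasDerivAt_exp_mul (c t : ℝ) :
    HasDerivAt (fun t => exp (c * t)) (c * exp (c * t)) t := by
  simpa [mul_comm] using ((hasDerivAt_id t).const_mul c).exp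

lemma deriv_mul_exp_mul_sub_mul_exp_mul (a b c d : ℝ) :
    deriv (fun t => a * exp (c * t) - b * exp (d * t)) =
      fun t => a * c * exp (c * t) - b * d * exp (d * t) := by
  funext t
  exact (((hasDerivAt_exp_mul c t).const_mul a).sub
    ((hasDerivAt_exp_mul d t).const_mul b)).deriv.trans (by ring)

lemma one_sub_exp_mul_mul_exp_mul (l1 l2 : ℝ) :
    (fun t : ℝ => (1 - exp (-l1 * t)) * exp (-l2 * t)) =
      fun t => 1 * exp (-l2 * t) - 1 * exp (-(l1 + l2) * t) := by
  funext t
  rw [sub_mul, ← exp_add]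
  ring_nf

lemma deriv_deriv_one_sub_exp_mul_mul_exp_mul_zero (l1 l2 : ℝ) :
    deriv (deriv (fun t : ℝ => (1 - exp (-l1 * t)) * exp (-l2 * t))) 0 =
      -l1 ^ 2 - 2 * l1 * l2 := by
  rw [one_sub_exp_mul_mul_exp_mul, deriv_mul_exp_mul_sub_mul_exp_mul,
    deriv_mul_exp_mul_sub_mul_exp_mul]
  simp only [mul_zero, exp_zero]
  ring

lemma chain_rate_matrix_sq_zero_one (l1 l2 : ℝ) :
    ((!![-l1, l1, 0; 0, -l2, l2; 0, 0, 0] : Matrix (Fin 3) (Fin 3) ℝ) ^ 2) 0 1 =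
      -l1 ^ 2 - l1 * l2 := by
  simp only [sq, Matrix.mul_apply, Fin.sum_univ_three, Matrix.of_apply, Matrix.cons_val',
    Matrix.cons_val_fin_one, Matrix.cons_val_zero, Matrix.cons_val_one, Matrix.cons_val, mul_zero,
    add_zero]
  ring

/-- For the two-element chain poset `1 ≺ 2` with rate matrix
`Q = [[−λ_1, λ_1, 0], [0, −λ_2, λ_2], [0, 0, 0]]` and discrete CBN transition entry
`p̃_{∅,{1}}(t) = (1 − e^{−λ_1 t}) e^{−λ_2 t}`, we have
`(d²/dt²) p̃_{∅,{1}}(t)|_{t=0} = −λ_1² − 2λ_1λ_2` while `(Q²)_{∅,{1}} = −λ_1² − λ_1λ_2`;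
these differ, so `p̃` is not a second order approximation of `exp(tQ)`. -/
theorem stmt10 (l1 l2 : ℝ) (h1 : 0 < l1) (h2 : 0 < l2) :
    deriv (deriv (fun t : ℝ => (1 - Real.exp (-l1 * t)) * Real.exp (-l2 * t))) 0 =
        -l1 ^ 2 - 2 * l1 * l2 ∧
    ((!![-l1, l1, 0; 0, -l2, l2; 0, 0, 0] : Matrix (Fin 3) (Fin 3) ℝ) ^ 2) 0 1 =
        -l1 ^ 2 - l1 * l2 ∧
    deriv (deriv (fun t : ℝ => (1 - Real.exp (-l1 * t)) * Real.exp (-l2 * t))) 0 ≠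
      ((!![-l1, l1, 0; 0, -l2, l2; 0, 0, 0] : Matrix (Fin 3) (Fin 3) ℝ) ^ 2) 0 1 := by
  rw [deriv_deriv_one_sub_exp_mul_mul_exp_mul_zero, chain_rate_matrix_sq_zero_one]
  refine ⟨rfl, rfl, fun h => ?_⟩
  have : 0 < l1 * l2 := mul_pos h1 h2
  linarith
end

section
/- Let P be a finite poset on [n], P_s = P ∪ {s}, λ ∈ ℝ^{{s}∪[n]}_{>0}, and Q a partial order on {s} ∪ [n] refining P_s. Let P_S be defined recursively by P_∅ = 1 and P_S = Σ_{j ∈ S : S∖{j} ∈ J(Q)} (λ_j / λ_{Exit(S∖{j})}) P_{S∖{j}}, with Exit taken with respect to P_s. Then for every order ideal S ∈ J(Q), P_S has the closed form P_S = ( ∏_{i ∈ S} λ_i ) · Σ_{C ∈ 𝒞(J(Q|_S))} ∏_{k=0}^{|S|−1} 1/λ_{Exit(C_k)}, where Q|_S is the subposet of Q induced on S and the sum runs over all maximal chains of J(Q|_S). -/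
/-- The poset `P_s = P ∪ {s}` on `{s} ∪ [n]`, modeled on `Option (Fin n)` with `s = none`:
the element `s` is incomparable to all others, and `P` is kept on `[n]`. -/
def liftRel {n : ℕ} (P : Fin n → Fin n → Prop) :
    Option (Fin n) → Option (Fin n) → Prop
  | some i, some j => P i j
  | _, _ => False

/-- `S` is an order ideal (lower set) of the strict order `R`. -/
def IsOrderIdeal {α : Type*} (R : α → α → Prop) (S : Finset α) : Prop :=
  ∀ p q : α, R p q → q ∈ S → p ∈ S

open scoped Classical in
/-- `Exit(S)`: the events not in `S` that can occur next with respect to `R`. -/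
noncomputable def exitSet {α : Type*} [Fintype α] (R : α → α → Prop) (S : Finset α) :
    Finset α :=
  Finset.univ.filter (fun j => j ∉ S ∧ IsOrderIdeal R (insert j S))

/-- `λ_T = Σ_{j ∈ T} λ_j`. -/
def rateSum {α : Type*} (lam : α → ℝ) (T : Finset α) : ℝ := ∑ j ∈ T, lam j

open scoped Classical in
/-- The recursively defined quantities
`P_S = Σ_{j ∈ S : S∖{j} ∈ J(Q)} (λ_j / λ_{Exit(S∖{j})}) P_{S∖{j}}`, `P_∅ = 1`,
where `Exit` is taken with respect to the poset `R = P_s` and the ideals with respect to the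
refinement `Q`. -/
noncomputable def Pval {n : ℕ} (R Q : Option (Fin n) → Option (Fin n) → Prop)
    (lam : Option (Fin n) → ℝ) (S : Finset (Option (Fin n))) : ℝ :=
  if S = ∅ then 1
  else ∑ j ∈ S.attach,
    if IsOrderIdeal Q (S.erase j.1) then
      (lam j.1 / rateSum lam (exitSet R (S.erase j.1))) * Pval R Q lam (S.erase j.1)
    else 0
termination_by S.card
decreasing_by exact Finset.card_erase_lt_of_mem j.2

/-- A maximal chain `∅ = C_0 ⊂ ⋯ ⊂ C_{|S|} = S` in the lattice `J(Q|_S)` of order ideals of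
the subposet of `Q` induced on `S`: each `C_k ⊆ S` has cardinality `k`, consecutive sets
are nested, and each `C_k` is a lower set of `Q` relative to `S`. -/
def IsMaxChainOn {n : ℕ} (Q : Option (Fin n) → Option (Fin n) → Prop)
    (S : Finset (Option (Fin n))) (C : Fin (S.card + 1) → Finset (Option (Fin n))) : Prop :=
  (∀ k, C k ⊆ S) ∧
  (∀ k a b, a ∈ S → b ∈ C k → Q a b → a ∈ C k) ∧
  (∀ k : Fin (S.card + 1), (C k).card = (k : ℕ)) ∧
  (∀ k : Fin S.card, C k.castSucc ⊆ C k.succ)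

open scoped Classical in
/-- The (finite) set `𝒞(J(Q|_S))` of maximal chains of the lattice of order ideals of the
induced subposet `Q|_S`. -/
noncomputable def maxChainsOn {n : ℕ} (Q : Option (Fin n) → Option (Fin n) → Prop)
    (S : Finset (Option (Fin n))) :
    Finset (Fin (S.card + 1) → Finset (Option (Fin n))) :=
  Finset.univ.filter (fun C => IsMaxChainOn Q S C)
open scoped Classical

section AuxLemmas

variable {n : ℕ} {Q : Option (Fin n) → Option (Fin n) → Prop}

lemma chain_mono_aux {S : Finset (Option (Fin n))}
    {C : Fin (S.card + 1) → Finset (Option (Fin n))} (hC : IsMaxChainOn Q S C) :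
    ∀ (b : ℕ) (hb : b < S.card + 1) (a : ℕ) (hab : a ≤ b),
      C ⟨a, lt_of_le_of_lt hab hb⟩ ⊆ C ⟨b, hb⟩ := by
  intro b
  induction b with
  | zero =>
    intro hb a hab
    have ha : a = 0 := Nat.le_zero.mp hab
    subst ha
    exact subset_rfl
  | succ b ihb =>
    intro hb a hab
    rcases Nat.eq_or_lt_of_le hab with he | hlt
    · subst he
      exact subset_rfl
    · have h1 : C ⟨a, by omega⟩ ⊆ C ⟨b, by omega⟩ := ihb (by omega) a (by omega)
      have h2 := hC.2.2.2 ⟨b, by omega⟩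
      exact h1.trans h2

lemma chain_mono {S : Finset (Option (Fin n))}
    {C : Fin (S.card + 1) → Finset (Option (Fin n))} (hC : IsMaxChainOn Q S C)
    {k l : Fin (S.card + 1)} (h : (k : ℕ) ≤ (l : ℕ)) : C k ⊆ C l :=
  chain_mono_aux hC l.1 l.2 k.1 h

lemma chain_last {S : Finset (Option (Fin n))}
    {C : Fin (S.card + 1) → Finset (Option (Fin n))} (hC : IsMaxChainOn Q S C)
    (k : Fin (S.card + 1)) (hk : (k : ℕ) = S.card) : C k = S :=
  Finset.eq_of_subset_of_card_le (hC.1 k) (by rw [hC.2.2.1 k, hk])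

lemma maxChainsOn_empty :
    maxChainsOn Q (∅ : Finset (Option (Fin n))) = {fun _ => ∅} := by
  ext C
  simp only [maxChainsOn, Finset.mem_filter, Finset.mem_univ, true_and,
    Finset.mem_singleton]
  constructor
  · rintro ⟨hsub, hlow, hcardk, hnest⟩
    funext k
    have h0 : (∅ : Finset (Option (Fin n))).card = 0 := Finset.card_empty
    have hk := k.2
    refine Finset.card_eq_zero.mp ?_
    rw [hcardk k]
    omega
  · rintro rfl
    refine ⟨fun k => subset_rfl, fun k a b _ hb _ => absurd hb (Finset.notMem_empty _),
      fun k => ?_, fun k => subset_rfl⟩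
    have h0 : (∅ : Finset (Option (Fin n))).card = 0 := Finset.card_empty
    have hk := k.2
    show (∅ : Finset (Option (Fin n))).card = (k : ℕ)
    omega

lemma closed_empty (R : Option (Fin n) → Option (Fin n) → Prop)
    (lam : Option (Fin n) → ℝ) :
    Pval R Q lam (∅ : Finset (Option (Fin n))) =
      (∏ a ∈ (∅ : Finset (Option (Fin n))), lam a) *
        ∑ C ∈ maxChainsOn Q (∅ : Finset (Option (Fin n))),
          ∏ k : Fin (∅ : Finset (Option (Fin n))).card,
            (rateSum lam (exitSet R (C k.castSucc)))⁻¹ := by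
  rw [Pval, if_pos rfl, maxChainsOn_empty, Finset.sum_singleton, Finset.prod_empty, one_mul]
  haveI : IsEmpty (Fin (∅ : Finset (Option (Fin n))).card) := by
    rw [Finset.card_empty]
    infer_instance
  rw [Finset.univ_eq_empty, Finset.prod_empty]

end AuxLemmas

/-- Closed form for the recursion `P_S`: for every order ideal `S` of `Q`,
`P_S = (∏_{i ∈ S} λ_i) Σ_{C ∈ 𝒞(J(Q|_S))} ∏_{k=0}^{|S|−1} 1/λ_{Exit(C_k)}`,
where `Exit` is taken with respect to `P_s`. -/
theorem stmt15 {n : ℕ} (P : Fin n → Fin n → Prop)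
    (hirr : ∀ i, ¬ P i i) (htrans : ∀ i j k, P i j → P j k → P i k)
    (lam : Option (Fin n) → ℝ) (hlam : ∀ a, 0 < lam a)
    (Q : Option (Fin n) → Option (Fin n) → Prop)
    (hQirr : ∀ a, ¬ Q a a) (hQtrans : ∀ a b c, Q a b → Q b c → Q a c)
    (href : ∀ a b, liftRel P a b → Q a b) :
    ∀ S : Finset (Option (Fin n)), IsOrderIdeal Q S →
      Pval (liftRel P) Q lam S =
        (∏ a ∈ S, lam a) *
          ∑ C ∈ maxChainsOn Q S,
            ∏ k : Fin S.card, (rateSum lam (exitSet (liftRel P) (C k.castSucc)))⁻¹ := by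
  intro S₀ hS₀
  suffices key : ∀ (m : ℕ) (S : Finset (Option (Fin n))), S.card ≤ m → IsOrderIdeal Q S →
      Pval (liftRel P) Q lam S =
        (∏ a ∈ S, lam a) *
          ∑ C ∈ maxChainsOn Q S,
            ∏ k : Fin S.card, (rateSum lam (exitSet (liftRel P) (C k.castSucc)))⁻¹ by
    exact key S₀.card S₀ le_rfl hS₀
  intro m
  induction m with
  | zero =>
    intro S hcard _
    have hS : S = ∅ := Finset.card_eq_zero.mp (Nat.le_zero.mp hcard)
    subst hS
    exact closed_empty (liftRel P) lam
  | succ m ih =>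
    intro S hcard hS
    by_cases hemp : S = ∅
    · subst hemp
      exact closed_empty (liftRel P) lam
    · have hm1 : 1 ≤ S.card := Finset.card_pos.mpr (Finset.nonempty_iff_ne_empty.mpr hemp)
      rw [Pval, if_neg hemp]
      rw [Finset.sum_attach S (fun a => if IsOrderIdeal Q (S.erase a) then
        (lam a / rateSum lam (exitSet (liftRel P) (S.erase a))) *
          Pval (liftRel P) Q lam (S.erase a) else 0)]
      obtain ⟨gm, hgm⟩ : ∃ gm : (Fin (S.card + 1) → Finset (Option (Fin n))) → Option (Fin n),
          gm = fun C => if h : (S \ C ⟨S.card - 1, Nat.lt_succ_of_le (Nat.sub_le _ _)⟩).Nonempty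
            then h.choose else none := ⟨_, rfl⟩
      -- basic facts about chains in maxChainsOn Q S
      have hpenfacts : ∀ C : Fin (S.card + 1) → Finset (Option (Fin n)), IsMaxChainOn Q S C →
          (S \ C ⟨S.card - 1, Nat.lt_succ_of_le (Nat.sub_le _ _)⟩).Nonempty ∧
          gm C ∈ S \ C ⟨S.card - 1, Nat.lt_succ_of_le (Nat.sub_le _ _)⟩ := by
        intro C hC
        have hDsub : C ⟨S.card - 1, Nat.lt_succ_of_le (Nat.sub_le _ _)⟩ ⊆ S :=
          hC.1 _
        have hDcard : (C ⟨S.card - 1, Nat.lt_succ_of_le (Nat.sub_le _ _)⟩).card = S.card - 1 :=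
          hC.2.2.1 _
        have hsd : (S \ C ⟨S.card - 1, Nat.lt_succ_of_le (Nat.sub_le _ _)⟩).card = 1 := by
          rw [Finset.card_sdiff_of_subset hDsub, hDcard]
          omega
        have hne : (S \ C ⟨S.card - 1, Nat.lt_succ_of_le (Nat.sub_le _ _)⟩).Nonempty := by
          rw [← Finset.card_pos, hsd]
          omega
        refine ⟨hne, ?_⟩
        simp only [hgm]
        rw [dif_pos hne]
        exact hne.choose_spec
      have hmaps : ∀ C ∈ maxChainsOn Q S, gm C ∈ S := by
        intro C hCm
        have hC : IsMaxChainOn Q S C := (Finset.mem_filter.mp hCm).2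
        exact (Finset.mem_sdiff.mp (hpenfacts C hC).2).1
      rw [← Finset.sum_fiberwise_of_maps_to hmaps
        (fun C => ∏ k : Fin S.card, (rateSum lam (exitSet (liftRel P) (C k.castSucc)))⁻¹),
        Finset.mul_sum]
      refine Finset.sum_congr rfl ?_
      intro j hj
      have hEcard : (S.erase j).card = S.card - 1 := Finset.card_erase_of_mem hj
      -- characterization of the fiber over j
      have hfiber : ∀ C, C ∈ (maxChainsOn Q S).filter (fun C => gm C = j) →
          IsMaxChainOn Q S C ∧
          C ⟨S.card - 1, Nat.lt_succ_of_le (Nat.sub_le _ _)⟩ = S.erase j := by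
        intro C hCf
        obtain ⟨hCm, hgmj⟩ := Finset.mem_filter.mp hCf
        have hC : IsMaxChainOn Q S C := (Finset.mem_filter.mp hCm).2
        have hmem := (hpenfacts C hC).2
        rw [hgmj] at hmem
        obtain ⟨hjS', hjD⟩ := Finset.mem_sdiff.mp hmem
        refine ⟨hC, Finset.eq_of_subset_of_card_le
          (Finset.subset_erase.mpr ⟨hC.1 _, hjD⟩) ?_⟩
        rw [Finset.card_erase_of_mem hj, hC.2.2.1]
      by_cases hid : IsOrderIdeal Q (S.erase j)
      · rw [if_pos hid]
        rw [ih (S.erase j) (by omega) hid]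
        have hsingle : S \ S.erase j = {j} := by
          ext x
          simp only [Finset.mem_sdiff, Finset.mem_erase, Finset.mem_singleton]
          constructor
          · rintro ⟨hxS, hx⟩
            by_contra hne'
            exact hx ⟨hne', hxS⟩
          · rintro rfl
            exact ⟨hj, fun h => h.1 rfl⟩
        have hgm_eq : ∀ D : Fin (S.card + 1) → Finset (Option (Fin n)),
            D ⟨S.card - 1, Nat.lt_succ_of_le (Nat.sub_le _ _)⟩ = S.erase j → gm D = j := by
          intro D hD
          have hsd : S \ D ⟨S.card - 1, Nat.lt_succ_of_le (Nat.sub_le _ _)⟩ = {j} := by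
            rw [hD]; exact hsingle
          have hne : (S \ D ⟨S.card - 1, Nat.lt_succ_of_le (Nat.sub_le _ _)⟩).Nonempty := by
            rw [hsd]; exact ⟨j, Finset.mem_singleton_self j⟩
          have hmem : gm D ∈ S \ D ⟨S.card - 1, Nat.lt_succ_of_le (Nat.sub_le _ _)⟩ := by
            simp only [hgm]
            rw [dif_pos hne]
            exact hne.choose_spec
          rw [hsd] at hmem
          exact Finset.mem_singleton.mp hmem
        have hbij : ∑ C ∈ (maxChainsOn Q S).filter (fun C => gm C = j),
              ∏ k : Fin S.card, (rateSum lam (exitSet (liftRel P) (C k.castSucc)))⁻¹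
            = ∑ C' ∈ maxChainsOn Q (S.erase j),
              (rateSum lam (exitSet (liftRel P) (S.erase j)))⁻¹ *
              ∏ k : Fin (S.erase j).card,
                (rateSum lam (exitSet (liftRel P) (C' k.castSucc)))⁻¹ := by
          refine Finset.sum_nbij'
            (fun C => fun k => C (Fin.castLE (by omega) k))
            (fun C' => fun k => if h : (k : ℕ) < S.card then C' ⟨(k : ℕ), by omega⟩ else S)
            ?_ ?_ ?_ ?_ ?_
          · intro C hCf
            obtain ⟨hC, hpen⟩ := hfiber C hCf
            refine Finset.mem_filter.mpr ⟨Finset.mem_univ _, ?_, ?_, ?_, ?_⟩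
            · intro k
              have hsub : C (Fin.castLE (by omega) k) ⊆
                  C ⟨S.card - 1, Nat.lt_succ_of_le (Nat.sub_le _ _)⟩ := by
                refine chain_mono hC ?_
                have hk2 := k.2
                simp only [Fin.coe_castLE]
                omega
              rw [hpen] at hsub
              exact hsub
            · intro k a b ha hb hq
              exact hC.2.1 _ a b (Finset.mem_of_mem_erase ha) hb hq
            · intro k
              have h1 := hC.2.2.1 (Fin.castLE (by omega) k)
              simpa using h1
            · intro k
              refine chain_mono hC ?_
              simp only [Fin.coe_castLE, Fin.coe_castSucc, Fin.val_succ]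
              omega
          · intro C' hC'm
            have hC' : IsMaxChainOn Q (S.erase j) C' := (Finset.mem_filter.mp hC'm).2
            have hpenext : (fun k : Fin (S.card + 1) =>
                if h : (k : ℕ) < S.card then C' ⟨(k : ℕ), by omega⟩ else S)
                ⟨S.card - 1, Nat.lt_succ_of_le (Nat.sub_le _ _)⟩ = S.erase j := by
              beta_reduce
              rw [dif_pos (show S.card - 1 < S.card by omega)]
              refine chain_last hC' _ ?_
              show S.card - 1 = (S.erase j).card
              omega
            refine Finset.mem_filter.mpr ⟨?_, hgm_eq _ hpenext⟩
            refine Finset.mem_filter.mpr ⟨Finset.mem_univ _, ?_, ?_, ?_, ?_⟩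
            · intro k
              beta_reduce
              by_cases hk : (k : ℕ) < S.card
              · rw [dif_pos hk]
                exact (hC'.1 _).trans (Finset.erase_subset _ _)
              · rw [dif_neg hk]
            · intro k a b ha hb hq
              beta_reduce at hb ⊢
              split_ifs at hb ⊢ with hk
              · have hbE := hC'.1 _ hb
                have haE : a ∈ S.erase j := hid a b hq hbE
                exact hC'.2.1 _ a b haE hb hq
              · exact ha
            · intro k
              beta_reduce
              by_cases hk : (k : ℕ) < S.card
              · rw [dif_pos hk]
                exact hC'.2.2.1 _
              · rw [dif_neg hk]
                have hk2 := k.2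
                show S.card = (k : ℕ)
                omega
            · intro k
              beta_reduce
              rw [dif_pos (show ((k.castSucc : Fin (S.card + 1)) : ℕ) < S.card from by
                simpa using k.2)]
              by_cases hk1 : ((k.succ : Fin (S.card + 1)) : ℕ) < S.card
              · rw [dif_pos hk1]
                refine chain_mono hC' ?_
                simp
              · rw [dif_neg hk1]
                exact (hC'.1 _).trans (Finset.erase_subset _ _)
          · intro C hCf
            obtain ⟨hC, hpen⟩ := hfiber C hCf
            funext k
            beta_reduce
            by_cases hk : (k : ℕ) < S.card
            · rw [dif_pos hk]
              rfl
            · rw [dif_neg hk]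
              exact (chain_last hC k (by have := k.2; omega)).symm
          · intro C' hC'm
            funext k
            beta_reduce
            have hk : ((Fin.castLE (show (S.erase j).card + 1 ≤ S.card + 1 by omega) k :
                Fin (S.card + 1)) : ℕ) < S.card := by
              simp only [Fin.coe_castLE]
              have := k.2
              omega
            rw [dif_pos hk]
            rfl
          · intro C hCf
            obtain ⟨hC, hpen⟩ := hfiber C hCf
            beta_reduce
            obtain ⟨GN, hGN⟩ : ∃ GN : ℕ → ℝ, GN = fun a =>
                if h : a < S.card then
                  (rateSum lam (exitSet (liftRel P) (C ⟨a, Nat.lt_succ_of_lt h⟩)))⁻¹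
                else 1 := ⟨_, rfl⟩
            have e1 : ∏ k : Fin S.card, (rateSum lam (exitSet (liftRel P) (C k.castSucc)))⁻¹
                = ∏ k : Fin S.card, GN (k : ℕ) := by
              refine Finset.prod_congr rfl fun k _ => ?_
              simp only [hGN]
              rw [dif_pos k.2]
              rfl
            have e2 : ∏ k : Fin S.card, GN (k : ℕ) = ∏ a ∈ Finset.range S.card, GN a :=
              Fin.prod_univ_eq_prod_range GN S.card
            have hr : Finset.range S.card = Finset.range (S.card - 1 + 1) := by
              congr 1
              omega
            have e3 : ∏ a ∈ Finset.range S.card, GN a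
                = (∏ a ∈ Finset.range (S.card - 1), GN a) * GN (S.card - 1) := by
              rw [hr, Finset.prod_range_succ]
            have e4 : GN (S.card - 1) = (rateSum lam (exitSet (liftRel P) (S.erase j)))⁻¹ := by
              simp only [hGN]
              rw [dif_pos (show S.card - 1 < S.card by omega), hpen]
            have e5 : ∏ a ∈ Finset.range (S.card - 1), GN a
                = ∏ k : Fin (S.erase j).card, (rateSum lam (exitSet (liftRel P)
                    (C (Fin.castLE (by omega) k.castSucc))))⁻¹ := by
              have hrr : Finset.range (S.card - 1) = Finset.range ((S.erase j).card) := by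
                rw [hEcard]
              rw [hrr, ← Fin.prod_univ_eq_prod_range GN ((S.erase j).card)]
              refine Finset.prod_congr rfl fun k _ => ?_
              simp only [hGN]
              rw [dif_pos (show (k : ℕ) < S.card by have := k.2; omega)]
              rfl
            rw [e1, e2, e3, e4, e5]
            ring
        rw [hbij, ← Finset.mul_sum, ← Finset.mul_prod_erase S lam hj, div_eq_mul_inv]
        ring
      · rw [if_neg hid]
        have hfe : (maxChainsOn Q S).filter (fun C => gm C = j) = ∅ := by
          refine Finset.eq_empty_of_forall_notMem ?_
          intro C hCf
          obtain ⟨hC, hpen⟩ := hfiber C hCf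
          refine hid ?_
          rw [← hpen]
          intro p q hpq hq
          have hqS : q ∈ S := hC.1 _ hq
          have hpS : p ∈ S := hS p q hpq hqS
          exact hC.2.1 _ p q hpS hq hpq
        rw [hfe, Finset.sum_empty, mul_zero]
end
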